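/- Let D = ad(Σ a_{α,i} L_{α,i}) + λ d be a derivation of 𝓑 (finitely many a_{α,i} nonzero) with D(L_{p,0} + L_{−2p,2p}) = 0 for some p ∈ ℕ, p ≥ 1. Then λ = 0 and a_{α,i} = 0 for all (α,i) with α + i ∉ p ℤ≥0 or (α,i) = (0,0). -/

import Mathlib

/-!
Write `D = ad a + λ d` and `x = L p 0 + L (-2p) (2p)`. The coefficient of
`L (α - 2p) (i + 2p)` in `D x = 0` reads
`c * a(α - 3p, i + 2p) + (2p + 1)(α + i) * a(α, i) = 0` for some `c`.
The shift `(α, i) ↦ (α - 3p, i + 2p)` lowers `α + i` by `p`, so it preserves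
`α + i ∉ pℕ`; since `a` has finite support, downward induction on `i` kills
`a(α, i)` whenever `α + i ∉ pℕ`. The coefficient of `L (-2p) (2p)` is then
`-2pλ` (the `a(0,0)` term has structure constant `0`), so `λ = 0`, and the
coefficient of `L p 0` becomes `-p * a(0,0)`.
-/

noncomputable section

abbrev B := (ℤ × ℕ) →₀ ℂ

/-- basis element `L α i` -/
def L (α : ℤ) (i : ℕ) : B := Finsupp.single (α, i) 1

/-- structure constant `(α-1)(j+1) - (β-1)(i+1)` -/
def coef (p q : ℤ × ℕ) : ℂ :=
  ((p.1 - 1) * ((q.2 : ℤ) + 1) - (q.1 - 1) * ((p.2 : ℤ) + 1) : ℤ)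

/-- the Block-type bracket, as a bilinear map -/
def br : B →ₗ[ℂ] B →ₗ[ℂ] B :=
  Finsupp.lsum ℂ fun p => LinearMap.toSpanSingleton ℂ _
    (Finsupp.lsum ℂ fun q => LinearMap.toSpanSingleton ℂ _
      (coef p q • L (p.1 + q.1) (p.2 + q.2)))

/-- the outer derivation `d`, with `d (L β j) = β • L β j` -/
def dmap : B →ₗ[ℂ] B :=
  Finsupp.lsum ℂ fun p => LinearMap.toSpanSingleton ℂ _ ((p.1 : ℂ) • L p.1 p.2)

def IsDer (D : B →ₗ[ℂ] B) : Prop := ∀ x y, D (br x y) = br (D x) y + br x (D y)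

def Is2Local (Δ : B → B) : Prop :=
  ∀ x y, ∃ D : B →ₗ[ℂ] B, IsDer D ∧ Δ x = D x ∧ Δ y = D y

lemma br_single_L (r : ℤ × ℕ) (c : ℂ) (β : ℤ) (j : ℕ) :
    br (Finsupp.single r c) (L β j) = Finsupp.single (r.1 + β, r.2 + j) (c * coef r (β, j)) := by
  simp [br, L, Finsupp.smul_single]

lemma br_L_apply_add (a : B) (γ β : ℤ) (k j : ℕ) :
    br a (L β j) (γ + β, k + j) = a (γ, k) * coef (γ, k) (β, j) := by
  induction a using Finsupp.induction_linear with
  | zero => simp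
  | add f g hf hg => simp [hf, hg, add_mul]
  | single r c =>
    rw [br_single_L, Finsupp.single_apply, Finsupp.single_apply]
    obtain ⟨r1, r2⟩ := r
    by_cases hr : (r1, r2) = (γ, k)
    · simp_all
    · rw [if_neg hr, if_neg (by simp_all), zero_mul]

lemma br_L_apply_of_lt (a : B) (β γ : ℤ) {j k : ℕ} (hkj : k < j) :
    br a (L β j) (γ, k) = 0 := by
  induction a using Finsupp.induction_linear with
  | zero => simp
  | add f g hf hg => simp [hf, hg]
  | single r c =>
    rw [br_single_L, Finsupp.single_eq_of_ne]
    simp only [ne_eq, Prod.mk.injEq, not_and]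
    omega

lemma dmap_L (β : ℤ) (j : ℕ) : dmap (L β j) = (β : ℂ) • L β j := by
  simp [dmap, L]

lemma coef_neg_self (α : ℤ) (i m : ℕ) :
    coef (α, i) (-(m : ℤ), m) = ((m : ℂ) + 1) * (α + i) := by
  simp only [coef]; push_cast; ring

lemma Finsupp.eq_zero_on_of_shift_step {M : Type*} [Zero M] (f : ℤ × ℕ →₀ M) (S : Set (ℤ × ℕ))
    (s : ℤ × ℕ) (hs : 0 < s.2) (hS : ∀ x ∈ S, x + s ∈ S)
    (hstep : ∀ x ∈ S, f (x + s) = 0 → f x = 0) : ∀ x ∈ S, f x = 0 := by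
  set N := f.support.sup Prod.snd + 1
  have hN : ∀ x, N ≤ x.2 → f x = 0 := fun x hx => by
    by_contra hfx
    have := Finset.le_sup (f := Prod.snd) (Finsupp.mem_support_iff.mpr hfx)
    omega
  suffices ∀ n : ℕ, ∀ x ∈ S, N ≤ x.2 + n → f x = 0 from fun x hx => this N x hx (by omega)
  intro n
  induction n with
  | zero => exact fun x _ hx => hN x hx
  | succ n ih =>
    intro x hx hxn
    exact hstep x hx (ih (x + s) (hS x hx) (by simp only [Prod.snd_add]; omega))

def specialSum (p : ℕ) : B := L p 0 + L (-(2 * p : ℤ)) (2 * p)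

namespace specialSum

variable {p : ℕ} {a : B} {lam : ℂ} (h : br a (specialSum p) + lam • dmap (specialSum p) = 0)
include h

lemma coeff_relation (q : ℤ × ℕ) :
    br a (L p 0) q + br a (L (-(2 * p : ℤ)) (2 * p)) q
      + lam * (p * L p 0 q - 2 * p * L (-(2 * p : ℤ)) (2 * p) q) = 0 := by
  have := DFunLike.congr_fun h q
  simp only [specialSum, map_add, dmap_L, Finsupp.add_apply, Finsupp.smul_apply, smul_eq_mul,
    Finsupp.coe_zero, Pi.zero_apply] at this
  push_cast at this
  linear_combination this

lemma apply_eq_zero_of_apply_shift_eq_zero (hp : 1 ≤ p) {α : ℤ} {i : ℕ} (hαi : α + i ≠ 0)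
    (hshift : a (α - 3 * p, i + 2 * p) = 0) : a (α, i) = 0 := by
  have rel := coeff_relation h (α - 2 * p, i + 2 * p)
  have h1 : br a (L p 0) (α - 2 * p, i + 2 * p) = 0 := by
    rw [show α - 2 * p = α - 3 * p + p by ring, ← add_zero (i + 2 * p), br_L_apply_add,
      hshift, zero_mul]
  have h2 : br a (L (-(2 * p : ℤ)) (2 * p)) (α - 2 * p, i + 2 * p)
      = a (α, i) * ((2 * p + 1) * (α + i)) := by
    rw [show α - 2 * p = α + -(2 * p) by ring, br_L_apply_add]
    have := coef_neg_self α i (2 * p)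
    push_cast at this
    rw [this]
  have h3 : L p 0 (α - 2 * p, i + 2 * p) = 0 := Finsupp.single_eq_of_ne (by simp; omega)
  have h4 : L (-(2 * p : ℤ)) (2 * p) (α - 2 * p, i + 2 * p) = 0 :=
    Finsupp.single_eq_of_ne (by simp; omega)
  rw [h1, h2, h3, h4] at rel
  have hc : ((2 * p + 1) * (α + i) : ℂ) ≠ 0 := mul_ne_zero (by norm_cast) (by exact_mod_cast hαi)
  exact (mul_eq_zero.mp (by linear_combination rel)).resolve_right hc

lemma lam_eq_zero (hp : 1 ≤ p) (ha : a (-(3 * p : ℤ), 2 * p) = 0) : lam = 0 := by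
  have rel := coeff_relation h (-(2 * p : ℤ), 2 * p)
  have h1 : br a (L p 0) (-(2 * p : ℤ), 2 * p) = 0 := by
    rw [show -(2 * p : ℤ) = -(3 * p) + p by ring, ← add_zero (2 * p), br_L_apply_add, ha, zero_mul]
  have h2 : br a (L (-(2 * p : ℤ)) (2 * p)) (-(2 * p : ℤ), 2 * p) = 0 := by
    have := br_L_apply_add a 0 (-(2 * p : ℤ)) 0 (2 * p)
    simp only [zero_add] at this
    rw [this, coef]
    push_cast
    ring
  have h3 : L p 0 (-(2 * p : ℤ), 2 * p) = 0 := Finsupp.single_eq_of_ne (by simp; omega)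
  have h4 : L (-(2 * p : ℤ)) (2 * p) (-(2 * p : ℤ), 2 * p) = 1 := Finsupp.single_eq_same
  rw [h1, h2, h3, h4] at rel
  have hp' : (p : ℂ) ≠ 0 := by norm_cast; omega
  exact (mul_eq_zero.mp (by linear_combination -rel / 2)).resolve_right hp'

lemma apply_zero_eq_zero (hp : 1 ≤ p) (hlam : lam = 0) : a (0, 0) = 0 := by
  have rel := coeff_relation h (p, 0)
  have h1 : br a (L p 0) (p, 0) = -(a (0, 0) * p) := by
    have := br_L_apply_add a 0 p 0 0
    simp only [zero_add] at this
    rw [this, coef]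
    push_cast
    ring
  rw [h1, br_L_apply_of_lt a _ _ (by omega), hlam] at rel
  have hp' : (p : ℂ) ≠ 0 := by norm_cast; omega
  exact (mul_eq_zero.mp (by linear_combination -rel)).resolve_right hp'

end specialSum

theorem der_killing_special_sum (p : ℕ) (hp : 1 ≤ p) (a : B) (lam : ℂ)
    (h : br a (L (p : ℤ) 0 + L (-(2 * p : ℤ)) (2 * p))
          + lam • dmap (L (p : ℤ) 0 + L (-(2 * p : ℤ)) (2 * p)) = 0) :
    lam = 0 ∧
    ∀ (α : ℤ) (i : ℕ),
      ((¬ ∃ n : ℕ, α + (i : ℤ) = (p : ℤ) * n) ∨ (α, i) = ((0 : ℤ), (0 : ℕ))) →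
      a (α, i) = 0 := by
  have hoff : ∀ x ∈ {x : ℤ × ℕ | ¬ ∃ n : ℕ, x.1 + (x.2 : ℤ) = p * n}, a x = 0 := by
    refine a.eq_zero_on_of_shift_step _ (-(3 * p : ℤ), 2 * p) (by simp; omega) ?_ ?_
    · rintro ⟨α, i⟩ hs ⟨n, hn⟩
      simp only [Prod.mk_add_mk] at hn
      exact hs ⟨n + 1, by push_cast at hn ⊢; linarith⟩
    · rintro ⟨α, i⟩ hs hshift
      refine specialSum.apply_eq_zero_of_apply_shift_eq_zero h hp ?_ ?_
      · exact fun h0 => hs ⟨0, by simpa using h0⟩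
      · simpa [sub_eq_add_neg] using hshift
  have hlam : lam = 0 := specialSum.lam_eq_zero h hp <| hoff _ fun ⟨n, hn⟩ => by
    push_cast at hn
    nlinarith
  refine ⟨hlam, fun α i => ?_⟩
  rintro (hs | h0)
  · exact hoff (α, i) hs
  · rw [h0]
    exact specialSum.apply_zero_eq_zero h hp hlam

end
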